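/- arXiv:2312.12535 — 3 statements merged into one kernel-verified Lean document; each statement's English description precedes it below -/
import Mathlib

section
/- Let α > 0, let f ∈ L¹[−π,π] with f ≥ 0, let b ∈ (−π,0) ∪ (0,π), let f_H be the polarization of f with respect to b, and let u_f and u_{f_H} be the solutions of the Robin problem with heat sources f and f_H respectively. Then for every convex increasing function φ : ℝ → ℝ, ∫_{−π}^{π} φ(u_f(x)) dx ≤ ∫_{−π}^{π} φ(u_{f_H}(x)) dx. -/
/-!
For `0 < b ≤ π` fold `[-π, π]` along `x ↦ 2b - x`: the piece `[-π, 2b - π)` stays fixed and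
`[2b - π, π]` is folded onto `[2b - π, b]`. Writing `x' = 2b - x`, the Green's function satisfies
`G(x, y) - G(x', y') = c_α b (2b - x - y)`, `G(x, y') - G(x', y) = c_α b (y - x)` and
`G(x', y) ≤ G(x, y)` for `x ∈ [2b - π, b]`, `y ∈ [-π, b]`. Folding the integral defining `u_f` as
well, and putting the larger of `f(y), f(y')` on the larger weight, one gets `u_f ≤ u_{f_H}` on
`[-π, b]` and, for `x ∈ [2b - π, b]`, `u_f(x') ≤ u_{f_H}(x)` and
`u_f(x) + u_f(x') ≤ u_{f_H}(x) + u_{f_H}(x')`. So the pair `(u_{f_H}(x), u_{f_H}(x'))` weakly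
majorizes `(u_f(x), u_f(x'))`, and a convex increasing `φ` respects weak majorization. The case
`b < 0` is the mirror image under `x ↦ -x`.
-/

open MeasureTheory Real Set intervalIntegral

/-- The constant `c_α = α/(1+απ)`. -/
noncomputable def cA (α : ℝ) : ℝ := α / (1 + α * π)

/-- The Green's function of the Robin problem on `[-π, π]`. -/
noncomputable def robinGreen (α x y : ℝ) : ℝ :=
  -(1/2) * cA α * x * y - (1/2) * |x - y| + 1 / (2 * cA α)

/-- The solution of the Robin problem with heat source `f`. -/
noncomputable def robinSol (α : ℝ) (f : ℝ → ℝ) (x : ℝ) : ℝ :=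
  ∫ y in (-π)..π, robinGreen α x y * f y

/-- The polarization (towards zero) of `f : [-π,π] → ℝ` with respect to `b`. -/
noncomputable def polar (b : ℝ) (f : ℝ → ℝ) (x : ℝ) : ℝ :=
  if 0 < b then
    if x < 2 * b - π then f x
    else if x ≤ b then max (f x) (f (2 * b - x))
    else min (f x) (f (2 * b - x))
  else
    if x ≤ b then min (f x) (f (2 * b - x))
    else if x ≤ 2 * b + π then max (f x) (f (2 * b - x))
    else f x

theorem ConvexOn.map_add_map_le_of_add_eq {D : Set ℝ} {φ : ℝ → ℝ} (hφ : ConvexOn ℝ D φ)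
    {s t A B : ℝ} (hs : s ∈ D) (ht : t ∈ D) (hsA : s ≤ A) (hAt : A ≤ t) (hsum : A + B = s + t) :
    φ A + φ B ≤ φ s + φ t := by
  rcases hsA.eq_or_lt with rfl | hsA
  · rw [show B = t by linarith]
  set θ := (A - s) / (t - s)
  have hθ : θ * (t - s) = A - s := div_mul_cancel₀ _ (by linarith)
  have hθ0 : 0 ≤ θ := div_nonneg (by linarith) (by linarith)
  have hθ1 : θ ≤ 1 := div_le_one_of_le₀ (by linarith) (by linarith)
  have hφA := hφ.2 ht hs hθ0 (sub_nonneg.2 hθ1) (add_sub_cancel θ 1)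
  have hφB := hφ.2 ht hs (sub_nonneg.2 hθ1) hθ0 (sub_add_cancel 1 θ)
  simp only [smul_eq_mul] at hφA hφB
  rw [show θ * t + (1 - θ) * s = A by linear_combination hθ] at hφA
  rw [show (1 - θ) * t + θ * s = B by linear_combination -hθ - hsum] at hφB
  linarith

theorem ConvexOn.map_add_map_le_of_weakly_majorized {φ : ℝ → ℝ} (hφ : ConvexOn ℝ univ φ)
    (hmono : Monotone φ) {A B A' B' : ℝ} (hA : A ≤ A') (hB : B ≤ A') (hsum : A + B ≤ A' + B') :
    φ A + φ B ≤ φ A' + φ B' := by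
  have := hφ.map_add_map_le_of_add_eq (B := B) (mem_univ (A + B - A')) (mem_univ A')
    (by linarith) hA (by ring)
  linarith [hmono (show A + B - A' ≤ B' by linarith)]

theorem mul_add_mul_le_mul_max_add_mul_min {a a' d d' p q : ℝ} (hp : 0 ≤ p) (hq : 0 ≤ q)
    (hd : d ≤ a) (hd' : d' ≤ a) (hsum : d + d' ≤ a + a') :
    d * p + d' * q ≤ a * max p q + a' * min p q := by
  rcases le_total q p with hqp | hpq
  · rw [max_eq_left hqp, min_eq_right hqp]
    nlinarith [mul_nonneg (sub_nonneg.2 hd) (sub_nonneg.2 hqp)]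
  · rw [max_eq_right hpq, min_eq_left hpq]
    nlinarith [mul_nonneg (sub_nonneg.2 hd') (sub_nonneg.2 hpq)]

theorem IntervalIntegrable.mono_set_of_le {f : ℝ → ℝ} {μ : Measure ℝ} {a b c d : ℝ}
    (hf : IntervalIntegrable f μ a d) (hab : a ≤ b) (hbc : b ≤ c) (hcd : c ≤ d) :
    IntervalIntegrable f μ b c :=
  hf.mono_set <| uIcc_subset_uIcc (mem_uIcc_of_le hab (hbc.trans hcd))
    (mem_uIcc_of_le (hab.trans hbc) hcd)

theorem IntervalIntegrable.max {f g : ℝ → ℝ} {μ : Measure ℝ} {a b : ℝ}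
    (hf : IntervalIntegrable f μ a b) (hg : IntervalIntegrable g μ a b) :
    IntervalIntegrable (fun y => max (f y) (g y)) μ a b :=
  intervalIntegrable_iff.2 (hf.def'.sup hg.def')

theorem IntervalIntegrable.min {f g : ℝ → ℝ} {μ : Measure ℝ} {a b : ℝ}
    (hf : IntervalIntegrable f μ a b) (hg : IntervalIntegrable g μ a b) :
    IntervalIntegrable (fun y => min (f y) (g y)) μ a b :=
  intervalIntegrable_iff.2 (hf.def'.inf hg.def')

section Fold

variable {g h : ℝ → ℝ} {a m c d : ℝ}

theorem IntervalIntegrable.comp_reflect (hg : IntervalIntegrable g volume a d) (ham : a ≤ m)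
    (hmc : m ≤ c) (hd : m + d = 2 * c) :
    IntervalIntegrable (fun y => g (2 * c - y)) volume m c := by
  have h := ((hg.mono_set_of_le (b := c) (ham.trans hmc) (by linarith) le_rfl).comp_sub_left
    (2 * c)).symm
  rwa [show 2 * c - d = m by linarith, show 2 * c - c = c by ring] at h

theorem integral_fold (hg : IntervalIntegrable g volume a d) (ham : a ≤ m) (hmc : m ≤ c)
    (hd : m + d = 2 * c) :
    ∫ y in a..d, g y = (∫ y in a..m, g y) + ∫ y in m..c, (g y + g (2 * c - y)) := by
  have hmc' := hg.mono_set_of_le ham hmc (by linarith)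
  rw [integral_add hmc' (hg.comp_reflect ham hmc hd), integral_comp_sub_left,
    show 2 * c - c = c by ring, show 2 * c - m = d by linarith,
    integral_add_adjacent_intervals hmc' (hg.mono_set_of_le (ham.trans hmc) (by linarith) le_rfl),
    integral_add_adjacent_intervals (hg.mono_set_of_le le_rfl ham (by linarith))
      (hg.mono_set_of_le ham (by linarith) le_rfl)]

theorem integral_le_integral_of_fold (hg : IntervalIntegrable g volume a d)
    (hh : IntervalIntegrable h volume a d) (ham : a ≤ m) (hmc : m ≤ c) (hd : m + d = 2 * c)
    (hfixed : ∀ y ∈ Ioo a m, g y ≤ h y)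
    (hfolded : ∀ y ∈ Ioo m c, g y + g (2 * c - y) ≤ h y + h (2 * c - y)) :
    ∫ y in a..d, g y ≤ ∫ y in a..d, h y := by
  have hmd : m ≤ d := by linarith
  rw [integral_fold hg ham hmc hd, integral_fold hh ham hmc hd]
  exact add_le_add
    (integral_mono_on_of_le_Ioo ham (hg.mono_set_of_le le_rfl ham hmd)
      (hh.mono_set_of_le le_rfl ham hmd) hfixed)
    (integral_mono_on_of_le_Ioo hmc
      ((hg.mono_set_of_le ham hmc (by linarith)).add (hg.comp_reflect ham hmc hd))
      ((hh.mono_set_of_le ham hmc (by linarith)).add (hh.comp_reflect ham hmc hd)) hfolded)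

end Fold

theorem continuous_intervalIntegral_mul {K : ℝ → ℝ → ℝ} (hK : Continuous (Function.uncurry K))
    {g : ℝ → ℝ} {a b : ℝ} (hg : IntervalIntegrable g volume a b) :
    Continuous fun x => ∫ y in a..b, K x y * g y := by
  refine continuous_iff_continuousAt.2 fun x₀ => ?_
  obtain ⟨C, hC⟩ := (isCompact_Icc.prod isCompact_uIcc).exists_bound_of_continuousOn
    (s := Icc (x₀ - 1) (x₀ + 1) ×ˢ uIcc a b) hK.continuousOn
  refine continuousAt_of_dominated_interval (bound := fun y => C * ‖g y‖)
    (.of_forall fun x =>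
      (hg.continuousOn_mul (hK.uncurry_left x).continuousOn).aestronglyMeasurable_restrict_uIoc)
    ?_ (hg.norm.const_mul C) (.of_forall fun y _ => ?_)
  · filter_upwards [Icc_mem_nhds (show x₀ - 1 < x₀ by linarith) (show x₀ < x₀ + 1 by linarith)]
      with x hx
    refine .of_forall fun y hy => ?_
    rw [norm_mul]
    exact mul_le_mul_of_nonneg_right (hC (x, y) ⟨hx, uIoc_subset_uIcc hy⟩) (norm_nonneg _)
  · exact ((hK.uncurry_right y).mul continuous_const).continuousAt

section RobinGreen

variable {α : ℝ}

theorem cA_nonneg (hα : 0 ≤ α) : 0 ≤ cA α :=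
  div_nonneg hα (by positivity)

theorem cA_mul_pi_le_one (hα : 0 ≤ α) : cA α * π ≤ 1 := by
  rw [cA, div_mul_eq_mul_div, div_le_one (by positivity)]
  linarith

theorem robinGreen_comm (α x y : ℝ) : robinGreen α x y = robinGreen α y x := by
  simp only [robinGreen, abs_sub_comm x y]
  ring

theorem robinGreen_neg_neg (α x y : ℝ) : robinGreen α (-x) (-y) = robinGreen α x y := by
  simp only [robinGreen, neg_sub_neg, abs_sub_comm y x]
  ring

theorem robinGreen_sub_robinGreen_reflect (α b x y : ℝ) :
    robinGreen α x y - robinGreen α (2 * b - x) (2 * b - y) = cA α * b * (2 * b - x - y) := by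
  simp only [robinGreen, show 2 * b - x - (2 * b - y) = -(x - y) by ring, abs_neg]
  ring

theorem robinGreen_reflect_right_sub_robinGreen_reflect_left (α b x y : ℝ) :
    robinGreen α x (2 * b - y) - robinGreen α (2 * b - x) y = cA α * b * (y - x) := by
  simp only [robinGreen, show x - (2 * b - y) = -(2 * b - x - y) by ring, abs_neg]
  ring

theorem robinGreen_reflect_left_le (hα : 0 ≤ α) {b x y : ℝ} (hb : 0 ≤ b)
    (hx : x ∈ Icc (2 * b - π) b) (hy : y ∈ Icc (-π) b) :
    robinGreen α (2 * b - x) y ≤ robinGreen α x y := by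
  obtain ⟨hx₁, hx₂⟩ := hx
  obtain ⟨hy₁, hy₂⟩ := hy
  have hc := cA_nonneg hα
  have hcπ := cA_mul_pi_le_one hα
  have h₂ : |2 * b - x - y| = 2 * b - x - y := abs_of_nonneg (by linarith)
  rcases le_total y x with hyx | hxy
  · have h₁ : |x - y| = x - y := abs_of_nonneg (by linarith)
    simp only [robinGreen, h₁, h₂]
    nlinarith [mul_nonneg (sub_nonneg.2 hx₂) (show 0 ≤ 1 + cA α * y by nlinarith)]
  · have h₁ : |x - y| = y - x := by rw [abs_sub_comm]; exact abs_of_nonneg (by linarith)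
    simp only [robinGreen, h₁, h₂]
    rcases le_total 0 y with hy0 | hy0
    · nlinarith [mul_nonneg (mul_nonneg hc hy0) (sub_nonneg.2 hx₂)]
    · nlinarith [mul_nonneg (neg_nonneg.2 hy0) (show 0 ≤ 1 - cA α * (b - x) by nlinarith)]

end RobinGreen

section Polar

variable {b : ℝ} {f : ℝ → ℝ}

theorem polar_of_lt (hb : 0 < b) {y : ℝ} (hy : y < 2 * b - π) : polar b f y = f y := by
  simp [polar, hb, hy]

theorem polar_of_mem_Icc (hb : 0 < b) {y : ℝ} (hy : y ∈ Icc (2 * b - π) b) :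
    polar b f y = max (f y) (f (2 * b - y)) := by
  simp [polar, hb, hy.2, not_lt.2 hy.1]

theorem polar_of_gt (hb : 0 < b) (hbπ : b ≤ π) {y : ℝ} (hy : b < y) :
    polar b f y = min (f y) (f (2 * b - y)) := by
  simp [polar, hb, not_le.2 hy, show ¬ y < 2 * b - π by linarith]

theorem polar_comp_neg (hb : b ∈ Ioo (-π) 0) :
    (fun y => polar b f (-y)) = polar (-b) (fun z => f (-z)) := by
  funext y
  simp only [polar, neg_pos.2 hb.2, not_lt.2 hb.2.le, if_true, if_false, neg_neg,
    show 2 * -b - y = -(2 * b - -y) by ring]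
  split_ifs <;> first
    | rfl
    | (exfalso; linarith [hb.1])
    | (obtain rfl : y = -b := by linarith
       simp [two_mul])

theorem intervalIntegrable_polar (hb : 0 < b) (hbπ : b ≤ π)
    (hf : IntervalIntegrable f volume (-π) π) :
    IntervalIntegrable (polar b f) volume (-π) π := by
  have hreflect : ∀ u v, 2 * b - π ≤ u → u ≤ v → v ≤ π →
      IntervalIntegrable (fun y => f (2 * b - y)) volume u v := fun u v h₁ h₂ h₃ =>
    ((hf.mono_set_of_le (b := 2 * b - v) (c := 2 * b - u) (by linarith) (by linarith)
      (by linarith)).comp_sub_left (2 * b)).symm.mono_set (by simp)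
  have h₁ : IntervalIntegrable (polar b f) volume (-π) (2 * b - π) :=
    (hf.mono_set_of_le le_rfl (by linarith) (by linarith)).congr_uIoo fun y hy => by
      rw [uIoo_of_le (by linarith)] at hy
      exact (polar_of_lt hb hy.2).symm
  have h₂ : IntervalIntegrable (polar b f) volume (2 * b - π) b :=
    ((hf.mono_set_of_le (by linarith) (by linarith) hbπ).max
      (hreflect _ _ le_rfl (by linarith) hbπ)).congr_uIoo fun y hy => by
      rw [uIoo_of_le (by linarith)] at hy
      exact (polar_of_mem_Icc hb (Ioo_subset_Icc_self hy)).symm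
  have h₃ : IntervalIntegrable (polar b f) volume b π :=
    ((hf.mono_set_of_le (by linarith) hbπ le_rfl).min
      (hreflect _ _ (by linarith) hbπ le_rfl)).congr_uIoo fun y hy => by
      rw [uIoo_of_le hbπ] at hy
      exact (polar_of_gt hb hbπ hy.1).symm
  exact (h₁.trans h₂).trans h₃

end Polar

theorem integral_mul_le_integral_mul_polar {b : ℝ} (hb : 0 < b) (hbπ : b ≤ π) {f : ℝ → ℝ}
    (hf : IntervalIntegrable f volume (-π) π) (hf0 : ∀ y ∈ Icc (-π) π, 0 ≤ f y)
    {K K' : ℝ → ℝ} (hK : Continuous K) (hK' : Continuous K')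
    (hfixed : ∀ y ∈ Icc (-π) (2 * b - π), K' y ≤ K y)
    (hfolded : ∀ y ∈ Icc (2 * b - π) b,
      K' y ≤ K y ∧ K' (2 * b - y) ≤ K y ∧ K' y + K' (2 * b - y) ≤ K y + K (2 * b - y)) :
    ∫ y in (-π)..π, K' y * f y ≤ ∫ y in (-π)..π, K y * polar b f y := by
  have hm : -π ≤ 2 * b - π := by linarith
  refine integral_le_integral_of_fold (c := b) (hf.continuousOn_mul hK'.continuousOn)
    ((intervalIntegrable_polar hb hbπ hf).continuousOn_mul hK.continuousOn) hm (by linarith)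
    (by ring) (fun y hy => ?_) (fun y hy => ?_)
  · rw [polar_of_lt hb hy.2]
    exact mul_le_mul_of_nonneg_right (hfixed y (Ioo_subset_Icc_self hy))
      (hf0 y ⟨hy.1.le, by linarith [hy.2]⟩)
  · obtain ⟨h₁, h₂, h₃⟩ := hfolded y (Ioo_subset_Icc_self hy)
    rw [polar_of_mem_Icc hb (Ioo_subset_Icc_self hy), polar_of_gt hb hbπ (by linarith [hy.2]),
      sub_sub_cancel, min_comm]
    exact mul_add_mul_le_mul_max_add_mul_min (hf0 y ⟨by linarith [hy.1], by linarith [hy.2]⟩)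
      (hf0 _ ⟨by linarith [hy.2], by linarith [hy.1]⟩) h₁ h₂ h₃

section RobinSol

variable {α : ℝ}

theorem continuous_robinGreen (α : ℝ) : Continuous (Function.uncurry (robinGreen α)) := by
  unfold robinGreen
  fun_prop

theorem continuous_robinSol {g : ℝ → ℝ} (hg : IntervalIntegrable g volume (-π) π) :
    Continuous (robinSol α g) :=
  continuous_intervalIntegral_mul (continuous_robinGreen α) hg

theorem robinSol_comp_neg (α : ℝ) (g : ℝ → ℝ) (x : ℝ) :
    robinSol α (fun z => g (-z)) x = robinSol α g (-x) := by
  have h := integral_comp_neg (a := -π) (b := π) (fun y => robinGreen α (-x) y * g y)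
  simp only [robinGreen_neg_neg, neg_neg] at h
  exact h

theorem integral_comp_robinSol_comp_neg (φ g : ℝ → ℝ) :
    ∫ x in (-π)..π, φ (robinSol α (fun z => g (-z)) x) = ∫ x in (-π)..π, φ (robinSol α g x) := by
  simp only [robinSol_comp_neg]
  simpa using integral_comp_neg (a := -π) (b := π) (fun x => φ (robinSol α g x))

theorem robinSol_add_robinSol {g : ℝ → ℝ} (hg : IntervalIntegrable g volume (-π) π) (x x' : ℝ) :
    robinSol α g x + robinSol α g x' =
      ∫ y in (-π)..π, (robinGreen α x y + robinGreen α x' y) * g y := by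
  simp only [robinSol, add_mul]
  exact (integral_add (hg.continuousOn_mul ((continuous_robinGreen α).uncurry_left x).continuousOn)
    (hg.continuousOn_mul ((continuous_robinGreen α).uncurry_left x').continuousOn)).symm

end RobinSol

section Polarization

variable {α b : ℝ} {f : ℝ → ℝ} (hα : 0 ≤ α) (hb : 0 < b) (hbπ : b ≤ π)
  (hf : IntervalIntegrable f volume (-π) π) (hf0 : ∀ y ∈ Icc (-π) π, 0 ≤ f y)
include hα hb hbπ hf hf0

theorem robinSol_le_robinSol_polar {x : ℝ} (hx : x ∈ Icc (-π) b) :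
    robinSol α f x ≤ robinSol α (polar b f) x :=
  integral_mul_le_integral_mul_polar hb hbπ hf hf0 ((continuous_robinGreen α).uncurry_left x)
    ((continuous_robinGreen α).uncurry_left x) (fun _ _ => le_rfl) fun y hy =>
    ⟨le_rfl, by simpa only [robinGreen_comm α x] using robinGreen_reflect_left_le hα hb.le hy hx,
      le_rfl⟩

theorem robinSol_reflect_le_robinSol_polar {x : ℝ} (hx : x ∈ Icc (2 * b - π) b) :
    robinSol α f (2 * b - x) ≤ robinSol α (polar b f) x := by
  have hcb : 0 ≤ cA α * b := mul_nonneg (cA_nonneg hα) hb.le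
  refine integral_mul_le_integral_mul_polar hb hbπ hf hf0
    ((continuous_robinGreen α).uncurry_left x) ((continuous_robinGreen α).uncurry_left _)
    (fun y hy => robinGreen_reflect_left_le hα hb.le hx ⟨hy.1, by linarith [hy.2]⟩)
    fun y hy => ⟨robinGreen_reflect_left_le hα hb.le hx ⟨by linarith [hy.1], hy.2⟩, ?_, ?_⟩
  · have := robinGreen_sub_robinGreen_reflect α b x y
    nlinarith [mul_nonneg hcb (show 0 ≤ 2 * b - x - y by linarith [hx.2, hy.2])]
  · have := robinGreen_sub_robinGreen_reflect α b x y
    have := robinGreen_reflect_right_sub_robinGreen_reflect_left α b x y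
    nlinarith [mul_nonneg hcb (show 0 ≤ 2 * b - 2 * x by linarith [hx.2])]

theorem robinSol_add_reflect_le_robinSol_polar (x : ℝ) :
    robinSol α f x + robinSol α f (2 * b - x) ≤
      robinSol α (polar b f) x + robinSol α (polar b f) (2 * b - x) := by
  have hcb : 0 ≤ cA α * b := mul_nonneg (cA_nonneg hα) hb.le
  have hK : Continuous fun y => robinGreen α x y + robinGreen α (2 * b - x) y :=
    ((continuous_robinGreen α).uncurry_left x).add ((continuous_robinGreen α).uncurry_left _)
  rw [robinSol_add_robinSol hf, robinSol_add_robinSol (intervalIntegrable_polar hb hbπ hf)]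
  refine integral_mul_le_integral_mul_polar hb hbπ hf hf0 hK hK (fun _ _ => le_rfl)
    fun y hy => ⟨le_rfl, ?_, le_rfl⟩
  have := robinGreen_sub_robinGreen_reflect α b x y
  have := robinGreen_reflect_right_sub_robinGreen_reflect_left α b x y
  nlinarith [mul_nonneg hcb (show 0 ≤ 2 * b - 2 * y by linarith [hy.2])]

theorem integral_robinSol_le_integral_robinSol_polar {φ : ℝ → ℝ} (hφ : ConvexOn ℝ univ φ)
    (hmono : Monotone φ) :
    ∫ x in (-π)..π, φ (robinSol α f x) ≤ ∫ x in (-π)..π, φ (robinSol α (polar b f) x) := by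
  have hφc : Continuous φ := continuousOn_univ.1 (hφ.continuousOn isOpen_univ)
  have hu := hφc.comp (continuous_robinSol (α := α) hf)
  have hU := hφc.comp (continuous_robinSol (α := α) (intervalIntegrable_polar hb hbπ hf))
  refine integral_le_integral_of_fold (m := 2 * b - π) (c := b) (hu.intervalIntegrable _ _)
    (hU.intervalIntegrable _ _) (by linarith) (by linarith) (by ring) (fun x hx => ?_)
    (fun x hx => ?_)
  · exact hmono (robinSol_le_robinSol_polar hα hb hbπ hf hf0 ⟨hx.1.le, by linarith [hx.2]⟩)
  · have hx' : x ∈ Icc (2 * b - π) b := Ioo_subset_Icc_self hx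
    exact hφ.map_add_map_le_of_weakly_majorized hmono
      (robinSol_le_robinSol_polar hα hb hbπ hf hf0 ⟨by linarith [hx.1], hx.2.le⟩)
      (robinSol_reflect_le_robinSol_polar hα hb hbπ hf hf0 hx')
      (robinSol_add_reflect_le_robinSol_polar hα hb hbπ hf hf0 x)

end Polarization

/-- **Polarization and convex integral means.** -/
theorem polarization_convex_integral_means
    (α : ℝ) (hα : 0 < α)
    (f : ℝ → ℝ) (hf : IntegrableOn f (Icc (-π) π))
    (hf0 : ∀ x ∈ Icc (-π) π, 0 ≤ f x)
    (b : ℝ) (hb : b ∈ Ioo (-π) 0 ∪ Ioo 0 π)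
    (φ : ℝ → ℝ) (hφconv : ConvexOn ℝ univ φ) (hφmono : Monotone φ) :
    ∫ x in (-π)..π, φ (robinSol α f x) ≤ ∫ x in (-π)..π, φ (robinSol α (polar b f) x) := by
  have hfI : IntervalIntegrable f volume (-π) π :=
    (intervalIntegrable_iff_integrableOn_Icc_of_le (by linarith [pi_pos])).2 hf
  rcases hb with hb | ⟨hb, hbπ⟩
  · have hfI' : IntervalIntegrable (fun z => f (-z)) volume (-π) π := by
      simpa using (hfI.comp_sub_left 0).symm
    have h := integral_robinSol_le_integral_robinSol_polar hα.le (neg_pos.2 hb.2)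
      (by linarith [hb.1]) hfI' (fun y hy => hf0 (-y) ⟨by linarith [hy.2], by linarith [hy.1]⟩)
      hφconv hφmono
    rwa [← polar_comp_neg hb, integral_comp_robinSol_comp_neg,
      integral_comp_robinSol_comp_neg] at h
  · exact integral_robinSol_le_integral_robinSol_polar hα.le hb hbπ.le hfI hf0 hφconv hφmono
end

section
/- Let f ∈ L¹[−π,π] and α > 0. There exists a unique function u ∈ C¹[−π,π] such that: (a) u' is absolutely continuous on [−π,π]; (b) −u'' = f almost everywhere on (−π,π); and (c) −u'(−π) + αu(−π) = 0 and u'(π) + αu(π) = 0. -/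
open MeasureTheory Real Set

/-- `u` solves the Robin problem on `[-π, π]` with parameter `α` and heat source `f`:
`u` is `C¹` on `[-π,π]` (with derivative `u'`), `u'` is absolutely continuous on `[-π,π]`
(i.e., it is the indefinite integral of an integrable function `u''`), `-u'' = f` almost
everywhere on `(-π, π)`, and the Robin boundary conditions
`-u'(-π) + α u(-π) = u'(π) + α u(π) = 0` hold. -/
def IsRobinSolution (α : ℝ) (f : ℝ → ℝ) (u : ℝ → ℝ) : Prop :=
  ∃ u' u'' : ℝ → ℝ,
    ContinuousOn u (Icc (-π) π) ∧
    (∀ x ∈ Icc (-π) π, HasDerivWithinAt u (u' x) (Icc (-π) π) x) ∧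
    ContinuousOn u' (Icc (-π) π) ∧
    IntegrableOn u'' (Icc (-π) π) ∧
    (∀ x ∈ Icc (-π) π, u' x = u' (-π) + ∫ t in (-π)..x, u'' t) ∧
    (∀ᵐ x ∂(volume.restrict (Ioo (-π) π)), -u'' x = f x) ∧
    -u' (-π) + α * u (-π) = 0 ∧ u' π + α * u π = 0

/-- **Existence and uniqueness for the Robin problem.** -/
theorem robin_existence_uniqueness
    (α : ℝ) (hα : 0 < α)
    (f : ℝ → ℝ) (hf : IntegrableOn f (Icc (-π) π)) :
    ∃ u : ℝ → ℝ, IsRobinSolution α f u ∧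
      ∀ v : ℝ → ℝ, IsRobinSolution α f v → EqOn u v (Icc (-π) π) := by
  have hπ : (-π : ℝ) ≤ π := by linarith [pi_pos]
  set g : ℝ → ℝ := (Icc (-π) π).indicator f with hg_def
  have hgint : Integrable g := (integrable_indicator_iff measurableSet_Icc).2 hf
  set F : ℝ → ℝ := fun x => ∫ t in (-π)..x, g t with hF_def
  have hFcont : Continuous F := hgint.continuous_primitive (-π)
  set G : ℝ := ∫ t in (-π)..π, F t with hG_def
  have hden : (0:ℝ) < 2*α + 2*π*α^2 := by positivity
  set a : ℝ := (F π + α * G) / (2*α + 2*π*α^2) with ha_def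
  have ha_eq : a * (2*α + 2*π*α^2) = F π + α * G := by
    rw [ha_def, div_mul_cancel₀ _ hden.ne']
  set w : ℝ → ℝ := fun x => α * a - F x with hw_def
  have hwcont : Continuous w := continuous_const.sub hFcont
  set u : ℝ → ℝ := fun x => a + ∫ t in (-π)..x, w t with hu_def
  have hucont : Continuous u :=
    continuous_const.add (intervalIntegral.continuous_primitive
      (fun c d => hwcont.intervalIntegrable c d) (-π))
  have hF0 : F (-π) = 0 := intervalIntegral.integral_same
  have huderiv : ∀ x : ℝ, HasDerivAt u (w x) x := fun x =>
    ((hwcont.integral_hasStrictDerivAt (-π) x).hasDerivAt).const_add a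
  -- value of ∫ w over the whole interval
  have hIw : ∀ x : ℝ, (∫ t in (-π)..x, w t) = α * a * (x + π) - ∫ t in (-π)..x, F t := by
    intro x
    rw [hw_def]
    rw [intervalIntegral.integral_sub (intervalIntegrable_const) (hFcont.intervalIntegrable _ _)]
    rw [intervalIntegral.integral_const]
    simp only [smul_eq_mul]
    ring
  have huπ : u π = a + α * a * (2*π) - G := by
    rw [hu_def]; simp only; rw [hIw π, hG_def]; ring
  have huneg : u (-π) = a := by
    rw [hu_def]; simp [intervalIntegral.integral_same]
  -- the second boundary condition for u
  have hbc2 : w π + α * u π = 0 := by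
    rw [huπ, hw_def]
    simp only
    nlinarith [ha_eq]
  refine ⟨u, ⟨w, fun x => -g x, hucont.continuousOn,
      fun x _ => (huderiv x).hasDerivWithinAt, hwcont.continuousOn,
      hgint.neg.integrableOn, ?_, ?_, ?_, hbc2⟩, ?_⟩
  · intro x _
    have h5 : (∫ t in (-π)..x, -g t) = -F x := by
      rw [intervalIntegral.integral_neg]
    rw [h5, hw_def]
    simp only [hF0]
    ring
  · refine (ae_restrict_iff' measurableSet_Ioo).2 (ae_of_all _ fun x hx => ?_)
    have hgx : g x = f x := indicator_of_mem (Ioo_subset_Icc_self hx) f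
    simp [hgx]
  · rw [huneg, hw_def]; simp [hF0]
  -- uniqueness
  · rintro v ⟨v', v'', hvcont, hvderiv, hv'cont, hv''int, hv'eq, hae, hb1, hb2⟩
    -- Step 1: ∫ v'' = -F on Icc
    have hstep1 : ∀ x ∈ Icc (-π) π, (∫ t in (-π)..x, v'' t) = -F x := by
      intro x hx
      have h1 : (∫ t in (-π)..x, v'' t) = ∫ t in Ioo (-π) x, v'' t := by
        rw [intervalIntegral.integral_of_le hx.1, integral_Ioc_eq_integral_Ioo]
      have h2 : F x = ∫ t in Ioo (-π) x, g t := by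
        show (∫ t in (-π)..x, g t) = _
        rw [intervalIntegral.integral_of_le hx.1, integral_Ioc_eq_integral_Ioo]
      have hsub : Ioo (-π) x ⊆ Ioo (-π) π := Ioo_subset_Ioo_right hx.2
      have hae' : v'' =ᵐ[volume.restrict (Ioo (-π) x)] fun t => -g t := by
        have h3 : ∀ᵐ t ∂(volume.restrict (Ioo (-π) x)), -v'' t = f t :=
          ae_restrict_of_ae_restrict_of_subset hsub hae
        filter_upwards [h3, ae_restrict_mem measurableSet_Ioo] with t ht htm
        have : g t = f t := indicator_of_mem (Ioo_subset_Icc_self (hsub htm)) f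
        show v'' t = -g t
        linarith
      rw [h1, h2, integral_congr_ae hae', integral_neg]
    -- Step 2: v' x = v'(-π) - F x on Icc
    have hstep2 : ∀ x ∈ Icc (-π) π, v' x = v' (-π) - F x := by
      intro x hx
      rw [hv'eq x hx, hstep1 x hx]; ring
    -- Step 3: v x = v(-π) + ∫ v'
    have hstep3 : ∀ x ∈ Icc (-π) π, v x = v (-π) + ∫ t in (-π)..x, v' t := by
      intro x hx
      have hI : (∫ t in (-π)..x, v' t) = v x - v (-π) := by
        apply intervalIntegral.integral_eq_sub_of_hasDeriv_right_of_le hx.1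
        · exact hvcont.mono (Icc_subset_Icc_right hx.2)
        · intro t ht
          have htIcc : t ∈ Ioo (-π) π := ⟨ht.1, lt_of_lt_of_le ht.2 hx.2⟩
          exact ((hvderiv t (Ioo_subset_Icc_self htIcc)).hasDerivAt
            (Icc_mem_nhds htIcc.1 htIcc.2)).hasDerivWithinAt
        · apply ContinuousOn.intervalIntegrable
          rw [uIcc_of_le hx.1]
          exact hv'cont.mono (Icc_subset_Icc_right hx.2)
      rw [hI]; ring
    -- Step 4: determine the constants
    have hmem_neg : (-π) ∈ Icc (-π) π := ⟨le_refl _, hπ⟩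
    have hmem_pos : π ∈ Icc (-π) π := ⟨hπ, le_refl _⟩
    set a' : ℝ := v (-π) with ha'_def
    have hb' : v' (-π) = α * a' := by linarith
    have hIv' : (∫ t in (-π)..π, v' t) = α * a' * (2*π) - G := by
      have : (∫ t in (-π)..π, v' t) = ∫ t in (-π)..π, (α * a' - F t) := by
        apply intervalIntegral.integral_congr
        intro t ht
        rw [uIcc_of_le hπ] at ht
        rw [hstep2 t ht, hb']
      rw [this, intervalIntegral.integral_sub intervalIntegrable_const
        (hFcont.intervalIntegrable _ _), intervalIntegral.integral_const, hG_def]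
      simp only [smul_eq_mul]
      ring
    have hvπ : v π = a' + α * a' * (2*π) - G := by
      rw [hstep3 π hmem_pos, hIv']; ring
    have hv'π : v' π = α * a' - F π := by rw [hstep2 π hmem_pos, hb']
    have ha'a : a' = a := by
      have h4 : a' * (2*α + 2*π*α^2) = F π + α * G := by nlinarith [hb2, hvπ, hv'π]
      have := ha_eq
      nlinarith [h4, ha_eq]
    -- Step 5: conclude
    intro x hx
    have hv'w : ∀ t ∈ uIcc (-π) x, v' t = w t := by
      intro t ht
      rw [uIcc_of_le hx.1] at ht
      rw [hstep2 t ⟨ht.1, le_trans ht.2 hx.2⟩, hb', ha'a, hw_def]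
    rw [hstep3 x hx, ha'a, intervalIntegral.integral_congr hv'w, hu_def]
end

section
/- Let α > 0 and f ∈ L¹[−π,π]. Define u_f(x) = ∫_{−π}^{π} G(x,y) f(y) dy, where G(x,y) = −(1/2)c_α x y − (1/2)|x−y| + 1/(2c_α) and c_α = α/(1+απ). Then u_f ∈ C¹[−π,π], u_f' is absolutely continuous on [−π,π], −u_f'' = f almost everywhere on (−π,π), and −u_f'(−π) + αu_f(−π) = 0 and u_f'(π) + αu_f(π) = 0. -/
/-!
On `[-π, π]` one has `|x - y| = (y - x) + 2 (x - y)⁺`, so `robinSol α f` is an affine function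
of `x` minus `W x = ∫_{-π}^x (x - y) f y dy`. By Fubini, `W` is the double primitive
`∫_{-π}^x ∫_{-π}^t f`, hence `W' = ∫_{-π}^x f` and `W'' = f` almost everywhere. The Robin
conditions then reduce to two linear identities in `∫ f` and `∫ y f`, which hold exactly because
`c_α (1 + απ) = α`.
-/

open MeasureTheory Real Set

-- Fubini on the triangle `a < y ≤ t ≤ x`.
lemma integral_primitive_eq_integral_sub_mul {g : ℝ → ℝ} {a x : ℝ} (hax : a ≤ x)
    (hg : IntegrableOn g (Ioc a x)) :
    ∫ t in a..x, ∫ y in a..t, g y = ∫ y in a..x, (x - y) * g y := by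
  set S : Set (ℝ × ℝ) := {p | a < p.2 ∧ p.2 ≤ p.1}
  set μ := volume.restrict (Ioc a x)
  have hS : MeasurableSet S :=
    (measurableSet_lt measurable_const measurable_snd).inter
      (measurableSet_le measurable_snd measurable_fst)
  have h_int : Integrable (S.indicator fun p => g p.2) (μ.prod μ) := by
    have : IsFiniteMeasure μ := isFiniteMeasure_restrict.2 measure_Ioc_lt_top.ne
    simpa using ((integrable_const (1 : ℝ)).mul_prod hg).indicator hS
  rw [intervalIntegral.integral_of_le hax, intervalIntegral.integral_of_le hax]
  calc ∫ t in Ioc a x, ∫ y in a..t, g y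
      = ∫ t in Ioc a x, ∫ y in Ioc a x, S.indicator (fun p => g p.2) (t, y) := by
        refine setIntegral_congr_fun measurableSet_Ioc fun t ht => ?_
        change _ = ∫ y in Ioc a x, (Ioc a t).indicator g y
        rw [intervalIntegral.integral_of_le ht.1.le, setIntegral_indicator measurableSet_Ioc,
          inter_eq_right.2 (Ioc_subset_Ioc_right ht.2)]
    _ = ∫ y in Ioc a x, ∫ t in Ioc a x, S.indicator (fun p => g p.2) (t, y) :=
        integral_integral_swap h_int
    _ = ∫ y in Ioc a x, (x - y) * g y := by
        refine setIntegral_congr_fun measurableSet_Ioc fun y hy => ?_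
        have hcut : ∀ t, S.indicator (fun p => g p.2) (t, y) = (Ici y).indicator (fun _ => g y) t :=
          fun t => by by_cases ht : y ≤ t <;> simp [S, indicator, ht, hy.1]
        have hsec : Ioc a x ∩ Ici y = Icc y x := by
          ext t
          simp only [mem_inter_iff, mem_Ioc, mem_Ici, mem_Icc]
          constructor
          · exact fun h => ⟨h.2, h.1.2⟩
          · exact fun h => ⟨⟨hy.1.trans_le h.1, h.2⟩, h.1⟩
        simp_rw [hcut]
        rw [setIntegral_indicator measurableSet_Ici, setIntegral_const, hsec,
          Real.volume_real_Icc_of_le hy.2, smul_eq_mul]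

section

variable {f : ℝ → ℝ} {a b : ℝ}

lemma MeasureTheory.IntegrableOn.intervalIntegrable_continuous_mul (hf : IntegrableOn f (Icc a b))
    {φ : ℝ → ℝ} (hφ : Continuous φ) {s t : ℝ} (hs : s ∈ Icc a b) (ht : t ∈ Icc a b) :
    IntervalIntegrable (fun y => φ y * f y) volume s t :=
  ((hf.continuousOn_mul hφ.continuousOn isCompact_Icc).mono_set
    (uIcc_subset_Icc hs ht)).intervalIntegrable

lemma MeasureTheory.IntegrableOn.intervalIntegrable_of_mem (hf : IntegrableOn f (Icc a b)) {s t : ℝ}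
    (hs : s ∈ Icc a b) (ht : t ∈ Icc a b) : IntervalIntegrable f volume s t :=
  (hf.mono_set (uIcc_subset_Icc hs ht)).intervalIntegrable

lemma integral_sub_mul_eq (h₀ : IntervalIntegrable f volume a b)
    (h₁ : IntervalIntegrable (fun y => y * f y) volume a b) (x : ℝ) :
    ∫ y in a..b, (x - y) * f y = x * (∫ y in a..b, f y) - ∫ y in a..b, y * f y := by
  simp_rw [sub_mul]
  rw [intervalIntegral.integral_sub (h₀.const_mul x) h₁, intervalIntegral.integral_const_mul]

lemma integral_abs_sub_mul_eq (hf : IntegrableOn f (Icc a b)) {x : ℝ} (hx : x ∈ Icc a b) :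
    ∫ y in a..b, |x - y| * f y =
      2 * (∫ y in a..x, (x - y) * f y) - ∫ y in a..b, (x - y) * f y := by
  have ha : a ∈ Icc a b := ⟨le_rfl, hx.1.trans hx.2⟩
  have hb : b ∈ Icc a b := ⟨hx.1.trans hx.2, le_rfl⟩
  have hI : ∀ {φ : ℝ → ℝ}, Continuous φ → ∀ {s t}, s ∈ Icc a b → t ∈ Icc a b →
      IntervalIntegrable (fun y => φ y * f y) volume s t :=
    fun hφ _ _ => hf.intervalIntegrable_continuous_mul hφ
  have habs : Continuous fun y => |x - y| := by fun_prop
  have hlin : Continuous fun y => x - y := by fun_prop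
  have hleft : ∫ y in a..x, |x - y| * f y = ∫ y in a..x, (x - y) * f y :=
    intervalIntegral.integral_congr fun y hy => by
      rw [uIcc_of_le hx.1] at hy
      rw [abs_of_nonneg (sub_nonneg.2 hy.2)]
  have hright : ∫ y in x..b, |x - y| * f y = -∫ y in x..b, (x - y) * f y := by
    rw [← intervalIntegral.integral_neg]
    refine intervalIntegral.integral_congr fun y hy => ?_
    rw [uIcc_of_le hx.2] at hy
    simp only [abs_of_nonpos (sub_nonpos.2 hy.1), neg_mul]
  rw [← intervalIntegral.integral_add_adjacent_intervals (hI habs ha hx) (hI habs hx hb),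
    ← intervalIntegral.integral_add_adjacent_intervals (hI hlin ha hx) (hI hlin hx hb),
    hleft, hright]
  ring

lemma hasDerivWithinAt_integral_sub_mul (hf : IntegrableOn f (Icc a b)) {x : ℝ}
    (hx : x ∈ Icc a b) :
    HasDerivWithinAt (fun z => ∫ y in a..z, (z - y) * f y) (∫ y in a..x, f y) (Icc a b) x := by
  -- Extending `f` by zero makes its primitive continuous on all of `ℝ`.
  set g := (Icc a b).indicator f
  have hg : Integrable g := (integrable_indicator_iff measurableSet_Icc).2 hf
  have hgf : ∀ z ∈ Icc a b, EqOn g f (uIcc a z) := fun z hz y hy =>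
    indicator_of_mem (Icc_subset_Icc_right hz.2 (by rwa [uIcc_of_le hz.1] at hy)) f
  have hV : HasDerivAt (fun z => ∫ t in a..z, ∫ y in a..t, g y) (∫ y in a..x, g y) x :=
    ((hg.continuous_primitive a).integral_hasStrictDerivAt a x).hasDerivAt
  have hW : ∀ z ∈ Icc a b,
      ∫ y in a..z, (z - y) * f y = ∫ t in a..z, ∫ y in a..t, g y := fun z hz => by
    rw [integral_primitive_eq_integral_sub_mul hz.1 hg.integrableOn]
    exact intervalIntegral.integral_congr fun y hy => by rw [hgf z hz hy]
  rw [← intervalIntegral.integral_congr (hgf x hx)]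
  exact hV.hasDerivWithinAt.congr hW (hW x hx)

end

lemma cA_pos {α : ℝ} (hα : 0 < α) : 0 < cA α := by
  unfold cA
  positivity

lemma cA_mul_one_add_mul_pi {α : ℝ} (hα : 0 < α) : cA α * (1 + α * π) = α :=
  div_mul_cancel₀ α (by positivity)

lemma robinSol_eq {α : ℝ} {f : ℝ → ℝ} (hf : IntegrableOn f (Icc (-π) π)) {x : ℝ}
    (hx : x ∈ Icc (-π) π) :
    robinSol α f x =
      ((∫ y in (-π)..π, f y) / cA α - (∫ y in (-π)..π, y * f y)
        + x * ((∫ y in (-π)..π, f y) - cA α * ∫ y in (-π)..π, y * f y)) / 2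
      - ∫ y in (-π)..x, (x - y) * f y := by
  have ha : -π ∈ Icc (-π) π := ⟨le_rfl, hx.1.trans hx.2⟩
  have hb : π ∈ Icc (-π) π := ⟨hx.1.trans hx.2, le_rfl⟩
  have h₀ := hf.intervalIntegrable_of_mem ha hb
  have h₁ := hf.intervalIntegrable_continuous_mul (φ := fun y => y) continuous_id ha hb
  have habs := hf.intervalIntegrable_continuous_mul (φ := fun y => |x - y|) (by fun_prop) ha hb
  have hG : ∀ y, robinGreen α x y * f y =
      (-(1/2) * cA α * x) * (y * f y) - (1/2) * (|x - y| * f y) + (1 / (2 * cA α)) * f y :=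
    fun y => by rw [robinGreen]; ring
  rw [robinSol, funext hG, intervalIntegral.integral_add ((h₁.const_mul _).sub (habs.const_mul _))
    (h₀.const_mul _), intervalIntegral.integral_sub (h₁.const_mul _) (habs.const_mul _),
    intervalIntegral.integral_const_mul, intervalIntegral.integral_const_mul,
    intervalIntegral.integral_const_mul, integral_abs_sub_mul_eq hf hx,
    integral_sub_mul_eq h₀ h₁]
  ring

lemma hasDerivWithinAt_robinSol {α : ℝ} {f : ℝ → ℝ} (hf : IntegrableOn f (Icc (-π) π))
    {x : ℝ} (hx : x ∈ Icc (-π) π) :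
    HasDerivWithinAt (robinSol α f)
      (((∫ y in (-π)..π, f y) - cA α * ∫ y in (-π)..π, y * f y) / 2 - ∫ y in (-π)..x, f y)
      (Icc (-π) π) x := by
  set M₀ := ∫ y in (-π)..π, f y
  set M₁ := ∫ y in (-π)..π, y * f y
  have hline : HasDerivWithinAt (fun x => (M₀ / cA α - M₁ + x * (M₀ - cA α * M₁)) / 2)
      ((M₀ - cA α * M₁) / 2) (Icc (-π) π) x := by
    simpa using (((hasDerivWithinAt_id x _).mul_const (M₀ - cA α * M₁)).const_add
      (M₀ / cA α - M₁)).div_const 2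
  exact (hline.sub (hasDerivWithinAt_integral_sub_mul hf hx)).congr
    (fun z hz => robinSol_eq hf hz) (robinSol_eq hf hx)

/-- **The Green's-function representation solves the Robin problem.** -/
theorem robinSol_isRobinSolution
    (α : ℝ) (hα : 0 < α)
    (f : ℝ → ℝ) (hf : IntegrableOn f (Icc (-π) π)) :
    IsRobinSolution α f (robinSol α f) := by
  set M₀ := ∫ y in (-π)..π, f y
  set M₁ := ∫ y in (-π)..π, y * f y
  have hπ : -π ∈ Icc (-π) π := ⟨le_rfl, by linarith [pi_pos]⟩
  have hπ' : π ∈ Icc (-π) π := ⟨by linarith [pi_pos], le_rfl⟩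
  have hc := (cA_pos hα).ne'
  refine ⟨fun x => (M₀ - cA α * M₁) / 2 - ∫ y in (-π)..x, f y, fun x => -f x,
    fun x hx => (hasDerivWithinAt_robinSol hf hx).continuousWithinAt,
    fun x hx => hasDerivWithinAt_robinSol hf hx, ?_, hf.neg, fun x _ => ?_,
    ae_of_all _ fun x => neg_neg (f x), ?_, ?_⟩
  · rw [← uIcc_of_le hπ.2] at hf ⊢
    exact continuousOn_const.sub (intervalIntegral.continuousOn_primitive_interval hf)
  · simp [intervalIntegral.integral_neg, sub_eq_add_neg]
  · rw [robinSol_eq hf hπ]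
    simp only [intervalIntegral.integral_same]
    field_simp
    linear_combination (cA α * M₁ - M₀) * cA_mul_one_add_mul_pi hα
  · rw [robinSol_eq hf hπ', integral_sub_mul_eq (hf.intervalIntegrable_of_mem hπ hπ')
      (hf.intervalIntegrable_continuous_mul (φ := fun y => y) continuous_id hπ hπ')]
    field_simp
    linear_combination (-M₀ - cA α * M₁) * cA_mul_one_add_mul_pi hα
end
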